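/- arXiv:2507.05131 — 3 statements merged into one kernel-verified Lean document; each statement's English description precedes it below -/
import Mathlib

section
/- Isserlis' theorem: for a centered jointly Gaussian vector (X_1, ..., X_{2r}), the expectation E[X_1 · X_2 · ... · X_{2r}] equals the sum over all perfect matchings (pairings) P of {1,...,2r} of the product over pairs {i,j} in P of E[X_i X_j]. In particular, the expectation of a product of an odd number of centered jointly Gaussian variables is zero. -/
/-!
Polarization: `n! x₁⋯xₙ = ∑_T (-1)^(n - |T|) (∑_{i ∈ T} xᵢ)ⁿ`, so `E[X₁⋯Xₙ]` is a signed sum of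
the moments `E[S_Tⁿ]` of the Gaussian variables `S_T = ∑_{i ∈ T} Xᵢ`. These vanish for odd `n`,
and for `n = 2r` Gaussian integration by parts gives `E[S_Tⁿ] = (2r)!/(2^r r!) · (E[S_T²])^r`
with `E[S_T²] = ∑_{i,j ∈ T} E[XᵢXⱼ]`. Expanding `(∑_{i,j ∈ T} Cᵢⱼ)^r`, the same alternating sum
over `T` keeps exactly the words whose `2r` letters are all distinct, i.e. the bijections
`Fin r × Bool ≃ Fin n`; each perfect matching comes from `2^r r!` of them (the order of the
centralizer of a fixed-point-free involution), and the constants cancel.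
-/

open MeasureTheory ProbabilityTheory
open scoped BigOperators Classical

/-- A centered jointly Gaussian vector: every finite linear combination is a
centered Gaussian random variable. -/
def IsCenteredGaussianVector {Ω : Type*} [MeasurableSpace Ω] (μ : Measure Ω)
    {n : ℕ} (X : Fin n → Ω → ℝ) : Prop :=
  ∀ c : Fin n → ℝ, ∃ v : NNReal,
    Measure.map (fun ω => ∑ i, c i * X i ω) μ = gaussianReal 0 v

open Finset Nat NNReal

section InclusionExclusion

variable {ι R : Type*} [Fintype ι] [DecidableEq ι] [CommRing R]

theorem sum_neg_one_pow_card_compl_of_subset (S : Finset ι) :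
    ∑ T : Finset ι, (if S ⊆ T then (-1 : R) ^ #Tᶜ else 0) = if S = univ then 1 else 0 := by
  calc ∑ T : Finset ι, (if S ⊆ T then (-1 : R) ^ #Tᶜ else 0)
      = ∑ U : Finset ι, if U ⊆ Sᶜ then (-1 : R) ^ #U else 0 :=
        Fintype.sum_equiv ⟨compl, compl, compl_compl, compl_compl⟩ _ _ fun T ↦ by simp
    _ = ((∑ U ∈ Sᶜ.powerset, (-1 : ℤ) ^ #U : ℤ) : R) := by
        rw [← sum_filter]; push_cast; congr 1; ext; simp
    _ = if S = univ then 1 else 0 := by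
        rw [sum_powerset_neg_one_pow_card]; simp [compl_eq_empty_iff]

theorem sum_neg_one_pow_card_compl_mul_sum_piFinset {κ : Type*} [Fintype κ] [DecidableEq κ]
    (w : (κ → ι) → R) :
    ∑ T : Finset ι, (-1 : R) ^ #Tᶜ * ∑ p ∈ Fintype.piFinset (fun _ ↦ T), w p =
      ∑ p with Function.Surjective p, w p := by
  have hpi (T : Finset ι) : ∑ p ∈ Fintype.piFinset (fun _ ↦ T), w p =
      ∑ p, if univ.image p ⊆ T then w p else 0 := by
    rw [← sum_filter]; congr 1; ext p; simp [image_subset_iff]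
  simp_rw [hpi, mul_sum, sum_comm (γ := Finset ι), mul_ite, mul_zero, ← ite_zero_mul,
    ← sum_mul, sum_neg_one_pow_card_compl_of_subset, ite_mul, one_mul, zero_mul, sum_ite,
    sum_const_zero, add_zero]
  congr 1; ext p
  rw [mem_filter, mem_filter]
  simp [eq_univ_iff_forall, Function.Surjective]

theorem sum_surjective_eq_sum_equiv {κ M : Type*} [Fintype κ] [DecidableEq κ] [AddCommMonoid M]
    (h : Fintype.card κ = Fintype.card ι) (w : (κ → ι) → M) :
    ∑ p with Function.Surjective p, w p = ∑ e : κ ≃ ι, w e := by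
  have hbij {p : κ → ι} (hp : p.Surjective) : p.Bijective :=
    (Fintype.bijective_iff_surjective_and_card p).mpr ⟨hp, h⟩
  exact sum_bij' (fun p hp ↦ Equiv.ofBijective p (hbij (mem_filter.mp hp).2)) (fun e _ ↦ e)
    (by simp) (by simp [EquivLike.surjective]) (by simp) (by simp) (by simp)

theorem sum_neg_one_pow_card_compl_mul_sum_pow (x : ι → R) :
    ∑ T : Finset ι, (-1 : R) ^ #Tᶜ * (∑ i ∈ T, x i) ^ Fintype.card ι =
      (Fintype.card ι)! * ∏ i, x i := by
  simp_rw [sum_pow', sum_neg_one_pow_card_compl_mul_sum_piFinset]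
  rw [sum_surjective_eq_sum_equiv (Fintype.card_fin _)]
  simp_rw [Equiv.prod_comp]
  rw [sum_const, Finset.card_univ, Fintype.card_equiv (Fintype.equivFin ι).symm,
    Fintype.card_fin, nsmul_eq_mul]

end InclusionExclusion

theorem sum_sum_pow_eq_sum_piFinset {ι R : Type*} [CommSemiring R] (A : ι → ι → R)
    (T : Finset ι) (r : ℕ) :
    (∑ i ∈ T, ∑ j ∈ T, A i j) ^ r =
      ∑ p ∈ Fintype.piFinset (fun _ : Fin r × Bool ↦ T), ∏ k, A (p (k, true)) (p (k, false)) := by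
  rw [← sum_product', sum_pow']
  refine sum_nbij' (fun g p ↦ if p.2 then (g p.1).1 else (g p.1).2)
    (fun p k ↦ (p (k, true), p (k, false))) ?_ ?_ ?_ ?_ ?_
  · intro g hg
    simp only [Fintype.mem_piFinset, mem_product] at hg ⊢
    rintro ⟨k, _ | _⟩ <;> simp [hg k]
  · intro p hp
    simp only [Fintype.mem_piFinset, mem_product] at hp ⊢
    exact fun k ↦ ⟨hp _, hp _⟩
  · intro g _; rfl
  · intro p _; ext ⟨k, _ | _⟩ <;> rfl
  · intro g _; rfl

theorem sum_conj_eq_nat_card_centralizer_smul {G M : Type*} [Group G] [Fintype G] [DecidableEq G]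
    [AddCommMonoid M] (x : G) (f : G → M) :
    ∑ g, f (g * x * g⁻¹) = Nat.card (Subgroup.centralizer {x}) • ∑ y with IsConj x y, f y := by
  have himage : univ.image (fun g ↦ g * x * g⁻¹) = ({y | IsConj x y} : Finset G) := by
    ext y; simp [isConj_iff]
  rw [Finset.sum_comp, himage, smul_sum]
  refine sum_congr rfl fun y hy ↦ ?_
  obtain ⟨c, rfl⟩ := isConj_iff.mp (mem_filter.mp hy).2
  congr 1
  rw [Nat.card_eq_fintype_card, Fintype.card_subtype]
  refine card_nbij' (c⁻¹ * ·) (c * ·) ?_ ?_ (fun g _ ↦ by simp) (fun g _ ↦ by simp)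
  · intro g hg
    simp only [coe_filter, mem_univ, true_and, Set.mem_ofPred_eq,
      Subgroup.mem_centralizer_singleton_iff] at hg ⊢
    calc c⁻¹ * g * x = c⁻¹ * (g * x * g⁻¹) * g := by group
      _ = x * (c⁻¹ * g) := by rw [hg]; group
  · intro g hg
    simp only [coe_filter, mem_univ, true_and, Set.mem_ofPred_eq,
      Subgroup.mem_centralizer_singleton_iff] at hg ⊢
    calc c * g * x * (c * g)⁻¹ = c * (g * x) * g⁻¹ * c⁻¹ := by group
      _ = c * x * c⁻¹ := by rw [hg]; group

namespace Equiv.Perm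

section FixedPointFreeInvolution

variable {ι : Type*} [Fintype ι] [DecidableEq ι] {r : ℕ}

theorem cycleType_eq_replicate_two_iff (hι : Fintype.card ι = 2 * r) (σ : Perm ι) :
    σ.cycleType = Multiset.replicate r 2 ↔ σ * σ = 1 ∧ ∀ i, σ i ≠ i := by
  have hsupp : σ.support = univ ↔ ∀ i, σ i ≠ i := by simp [eq_univ_iff_forall]
  rw [← sq, ← hsupp]
  constructor
  · intro h
    refine ⟨pow_prime_eq_one_iff.mpr fun c hc ↦ ?_, eq_of_subset_of_card_le (subset_univ _) ?_⟩
    · rw [h] at hc; exact Multiset.eq_of_mem_replicate hc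
    · rw [← sum_cycleType, h, Multiset.sum_replicate, Finset.card_univ, hι, smul_eq_mul,
        mul_comm]
  · rintro ⟨h2, hs⟩
    have hsum := σ.sum_cycleType
    rw [cycleType_of_pow_prime_eq_one h2] at hsum ⊢
    rw [Multiset.sum_replicate, hs, Finset.card_univ, hι, smul_eq_mul] at hsum
    congr 1; omega

theorem even_card_of_mul_self_eq_one {σ : Perm ι} (h2 : σ * σ = 1) (hfix : ∀ i, σ i ≠ i) :
    Even (Fintype.card ι) := by
  have hs : σ.support = univ := eq_univ_iff_forall.mpr fun i ↦ mem_support.mpr (hfix i)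
  rw [← Finset.card_univ, ← hs, even_iff_two_dvd]
  exact two_dvd_card_support (by rwa [sq])

theorem nat_card_centralizer_of_cycleType_eq_replicate_two (hι : Fintype.card ι = 2 * r)
    {σ : Perm ι} (hσ : σ.cycleType = Multiset.replicate r 2) :
    Nat.card (Subgroup.centralizer {σ}) = 2 ^ r * r ! := by
  rw [nat_card_centralizer, hσ]
  rcases Nat.eq_zero_or_pos r with rfl | hr
  · simp [hι]
  · simp [hr.ne', hι, mul_comm]

end FixedPointFreeInvolution

def boolFlip (κ : Type*) : Perm (κ × Bool) :=
  prodCongr (Equiv.refl κ) (Function.Involutive.toPerm not Bool.not_not)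

@[simp]
theorem boolFlip_apply {κ : Type*} (p : κ × Bool) : boolFlip κ p = (p.1, !p.2) := rfl

variable {κ ι : Type*}

theorem permCongr_boolFlip_mul_self_eq_one_and_apply_ne (e : κ × Bool ≃ ι) :
    e.permCongr (boolFlip κ) * e.permCongr (boolFlip κ) = 1 ∧
      ∀ i, e.permCongr (boolFlip κ) i ≠ i := by
  refine ⟨by ext; simp, fun i h ↦ ?_⟩
  have := congrArg (fun j ↦ (e.symm j).2) h
  simp at this

theorem prod_eq_prod_lt_permCongr_boolFlip {R : Type*} [Fintype κ] [Fintype ι] [LinearOrder ι]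
    [CommMonoid R] (e : κ × Bool ≃ ι) (A : ι → ι → R) (hA : ∀ i j, A i j = A j i) :
    ∏ k, A (e (k, true)) (e (k, false)) =
      ∏ i with i < e.permCongr (boolFlip κ) i, A i (e.permCongr (boolFlip κ) i) := by
  rw [prod_filter, ← e.prod_comp, Fintype.prod_prod_type]
  refine prod_congr rfl fun k _ ↦ ?_
  have hne : e (k, true) ≠ e (k, false) := e.injective.ne (by simp)
  rcases hne.lt_or_gt with h | h <;> simp [h, h.not_gt, hA]

end Equiv.Perm

open Equiv Equiv.Perm in
theorem sum_neg_one_pow_card_compl_mul_sum_sum_pow {ι R : Type*} [Fintype ι] [LinearOrder ι]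
    [CommRing R] {r : ℕ} (hι : Fintype.card ι = 2 * r) (A : ι → ι → R)
    (hA : ∀ i j, A i j = A j i) :
    ∑ T : Finset ι, (-1 : R) ^ #Tᶜ * (∑ i ∈ T, ∑ j ∈ T, A i j) ^ r =
      (2 ^ r * r ! : ℕ) *
        ∑ σ : Perm ι with σ * σ = 1 ∧ ∀ i, σ i ≠ i, ∏ i with i < σ i, A i (σ i) := by
  set F : Perm ι → R := fun σ ↦ ∏ i with i < σ i, A i (σ i)
  have hcard : Fintype.card (Fin r × Bool) = Fintype.card ι := by simp [hι, mul_comm]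
  obtain ⟨e₀⟩ : Nonempty (Fin r × Bool ≃ ι) := ⟨Fintype.equivOfCardEq hcard⟩
  set τ := e₀.permCongr (boolFlip (Fin r))
  have hτ : τ.cycleType = Multiset.replicate r 2 :=
    (cycleType_eq_replicate_two_iff hι τ).mpr
      (permCongr_boolFlip_mul_self_eq_one_and_apply_ne e₀)
  calc _ = ∑ e : Fin r × Bool ≃ ι, ∏ k, A (e (k, true)) (e (k, false)) := by
        simp_rw [sum_sum_pow_eq_sum_piFinset, sum_neg_one_pow_card_compl_mul_sum_piFinset]
        exact sum_surjective_eq_sum_equiv hcard _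
    -- writing `e = π ∘ e₀`, the matching paired by `e` is `π τ π⁻¹`
    _ = ∑ π : Perm ι, F (π * τ * π⁻¹) := by
        rw [← (equivCongr e₀ (Equiv.refl ι)).symm.sum_comp]
        refine sum_congr rfl fun π _ ↦ ?_
        rw [prod_eq_prod_lt_permCongr_boolFlip _ A hA]
        congr! 3
    _ = (2 ^ r * r ! : ℕ) * ∑ σ with IsConj τ σ, F σ := by
        rw [sum_conj_eq_nat_card_centralizer_smul,
          nat_card_centralizer_of_cycleType_eq_replicate_two hι hτ, nsmul_eq_mul]
    _ = _ := by
        congr 2; ext σ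
        rw [mem_filter, mem_filter, isConj_iff_cycleType_eq, hτ, eq_comm,
          cycleType_eq_replicate_two_iff hι]

section GaussianMoments

theorem integrable_pow_gaussianReal (m : ℝ) (v : ℝ≥0) (k : ℕ) :
    Integrable (fun x : ℝ ↦ x ^ k) (gaussianReal m v) := by
  have := (memLp_id_gaussianReal (μ := m) (v := v) k).integrable_norm_pow'
  exact (integrable_norm_iff (by fun_prop)).mp (by simpa [norm_pow] using this)

theorem integrable_gaussianPDFReal_mul_pow {v : ℝ≥0} (hv : v ≠ 0) (k : ℕ) :
    Integrable (fun x ↦ gaussianPDFReal 0 v x * x ^ k) := by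
  have h := integrable_pow_gaussianReal 0 v k
  rw [gaussianReal_of_var_ne_zero _ hv, integrable_withDensity_iff_integrable_smul'
    (measurable_gaussianPDF 0 v) (ae_of_all _ fun _ ↦ gaussianPDF_lt_top)] at h
  simpa [toReal_gaussianPDF] using h

theorem hasDerivAt_gaussianPDFReal_zero (v : ℝ≥0) (x : ℝ) :
    HasDerivAt (gaussianPDFReal 0 v) (-(x / v) * gaussianPDFReal 0 v x) x := by
  have h := ((((hasDerivAt_id x).sub_const 0).pow 2).neg.div_const (2 * (v : ℝ))).exp.const_mul
    (Real.sqrt (2 * Real.pi * v))⁻¹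
  refine h.congr_deriv ?_
  simp [gaussianPDFReal_def]
  ring

/-- Integration by parts against the density: `(x^(k+1) φ)' = (k+1) x^k φ - x^(k+2) φ / v`. -/
theorem integral_pow_add_two_gaussianReal (v : ℝ≥0) (k : ℕ) :
    ∫ x, x ^ (k + 2) ∂gaussianReal 0 v = (k + 1) * v * ∫ x, x ^ k ∂gaussianReal 0 v := by
  rcases eq_or_ne v 0 with rfl | hv
  · simp [gaussianReal_zero_var]
  set p := gaussianPDFReal 0 v
  have hint (j : ℕ) := integrable_gaussianPDFReal_mul_pow hv j
  simp_rw [integral_gaussianReal_eq_integral_smul hv, smul_eq_mul]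
  have hderiv (x : ℝ) : HasDerivAt (fun x ↦ x ^ (k + 1) * p x)
      ((k + 1) * (p x * x ^ k) - (v : ℝ)⁻¹ * (p x * x ^ (k + 2))) x := by
    refine ((hasDerivAt_pow (k + 1) x).mul (hasDerivAt_gaussianPDFReal_zero v x)).congr_deriv ?_
    push_cast; ring
  have h0 := integral_eq_zero_of_hasDerivAt_of_integrable hderiv
    (((hint k).const_mul _).sub ((hint (k + 2)).const_mul _))
    ((hint (k + 1)).congr (ae_of_all _ fun x ↦ mul_comm _ _))
  rw [integral_sub ((hint k).const_mul _) ((hint (k + 2)).const_mul _), integral_const_mul,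
    integral_const_mul, sub_eq_zero] at h0
  have hv' : (v : ℝ) ≠ 0 := by exact_mod_cast hv
  field_simp at h0
  rw [← h0]; ring

theorem integral_pow_two_mul_add_one_gaussianReal (v : ℝ≥0) (r : ℕ) :
    ∫ x, x ^ (2 * r + 1) ∂gaussianReal 0 v = 0 := by
  induction r with
  | zero => simp [integral_id_gaussianReal]
  | succ r ih =>
    rw [show 2 * (r + 1) + 1 = 2 * r + 1 + 2 by ring, integral_pow_add_two_gaussianReal, ih,
      mul_zero]

theorem integral_pow_two_mul_gaussianReal (v : ℝ≥0) (r : ℕ) :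
    ∫ x, x ^ (2 * r) ∂gaussianReal 0 v = v ^ r * (2 * r)! / (2 ^ r * r !) := by
  induction r with
  | zero => simp
  | succ r ih =>
    rw [show 2 * (r + 1) = 2 * r + 2 by ring, integral_pow_add_two_gaussianReal, ih]
    push_cast [Nat.factorial_succ]
    field_simp
    ring

end GaussianMoments

namespace ProbabilityTheory.HasLaw

variable {Ω : Type*} [MeasurableSpace Ω] {μ : Measure Ω} {S : Ω → ℝ} {v : ℝ≥0}

theorem integrable_pow_of_gaussianReal (hS : HasLaw S (gaussianReal 0 v) μ) (k : ℕ) :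
    Integrable (fun ω ↦ S ω ^ k) μ :=
  (integrable_map_measure (g := fun x : ℝ ↦ x ^ k) (by fun_prop) hS.aemeasurable).mp
    (hS.map_eq ▸ integrable_pow_gaussianReal 0 v k)

theorem memLp_two_of_gaussianReal (hS : HasLaw S (gaussianReal 0 v) μ) : MemLp S 2 μ :=
  (memLp_two_iff_integrable_sq hS.aemeasurable.aestronglyMeasurable).mpr
    (hS.integrable_pow_of_gaussianReal 2)

theorem integral_pow_of_gaussianReal (hS : HasLaw S (gaussianReal 0 v) μ) (k : ℕ) :
    ∫ ω, S ω ^ k ∂μ = ∫ x, x ^ k ∂gaussianReal 0 v :=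
  hS.integral_comp (f := fun x ↦ x ^ k) (by fun_prop)

theorem integral_pow_two_mul_add_one_of_gaussianReal (hS : HasLaw S (gaussianReal 0 v) μ)
    (r : ℕ) : ∫ ω, S ω ^ (2 * r + 1) ∂μ = 0 := by
  rw [hS.integral_pow_of_gaussianReal, integral_pow_two_mul_add_one_gaussianReal]

theorem integral_pow_two_mul_of_gaussianReal (hS : HasLaw S (gaussianReal 0 v) μ) (r : ℕ) :
    ∫ ω, S ω ^ (2 * r) ∂μ = (∫ ω, S ω ^ 2 ∂μ) ^ r * (2 * r)! / (2 ^ r * r !) := by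
  have hvar : ∫ x, x ^ 2 ∂gaussianReal 0 v = v := by
    simpa using integral_pow_two_mul_gaussianReal v 1
  rw [hS.integral_pow_of_gaussianReal, hS.integral_pow_of_gaussianReal, hvar,
    integral_pow_two_mul_gaussianReal]

end ProbabilityTheory.HasLaw

section GaussianVector

variable {Ω : Type*} [MeasurableSpace Ω] {μ : Measure Ω}

theorem factorial_card_mul_integral_prod {ι : Type*} [Fintype ι] [DecidableEq ι]
    (X : ι → Ω → ℝ)
    (hint : ∀ T : Finset ι, Integrable (fun ω ↦ (∑ i ∈ T, X i ω) ^ Fintype.card ι) μ) :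
    (Fintype.card ι)! * ∫ ω, ∏ i, X i ω ∂μ =
      ∑ T : Finset ι, (-1) ^ #Tᶜ * ∫ ω, (∑ i ∈ T, X i ω) ^ Fintype.card ι ∂μ := by
  rw [← integral_const_mul]
  simp_rw [← sum_neg_one_pow_card_compl_mul_sum_pow]
  rw [integral_finsetSum _ fun T _ ↦ (hint T).const_mul _]
  simp_rw [integral_const_mul]

theorem integral_sum_sq {ι : Type*} (T : Finset ι) (X : ι → Ω → ℝ)
    (hX : ∀ i ∈ T, MemLp (X i) 2 μ) :
    ∫ ω, (∑ i ∈ T, X i ω) ^ 2 ∂μ = ∑ i ∈ T, ∑ j ∈ T, ∫ ω, X i ω * X j ω ∂μ := by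
  have hint {i j} (hi : i ∈ T) (hj : j ∈ T) : Integrable (fun ω ↦ X i ω * X j ω) μ :=
    (hX i hi).integrable_mul (hX j hj)
  simp_rw [sq, sum_mul_sum]
  rw [integral_finsetSum _ fun i hi ↦ integrable_finsetSum _ fun j hj ↦ hint hi hj]
  exact sum_congr rfl fun i hi ↦ integral_finsetSum _ fun j hj ↦ hint hi hj

namespace IsCenteredGaussianVector

variable {n : ℕ} {X : Fin n → Ω → ℝ}

theorem exists_hasLaw_sum (hX : IsCenteredGaussianVector μ X) (hmeas : ∀ i, Measurable (X i))
    (T : Finset (Fin n)) : ∃ v, HasLaw (fun ω ↦ ∑ i ∈ T, X i ω) (gaussianReal 0 v) μ := by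
  obtain ⟨v, hv⟩ := hX fun i ↦ if i ∈ T then 1 else 0
  simp only [ite_mul, one_mul, zero_mul, sum_ite_mem, univ_inter] at hv
  exact ⟨v, ⟨by fun_prop, hv⟩⟩

theorem factorial_mul_integral_prod (hX : IsCenteredGaussianVector μ X)
    (hmeas : ∀ i, Measurable (X i)) :
    n ! * ∫ ω, ∏ i, X i ω ∂μ = ∑ T : Finset (Fin n), (-1) ^ #Tᶜ * ∫ ω, (∑ i ∈ T, X i ω) ^ n ∂μ := by
  simpa using factorial_card_mul_integral_prod X fun T ↦
    (hX.exists_hasLaw_sum hmeas T).choose_spec.integrable_pow_of_gaussianReal _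

theorem integral_prod_eq_zero_of_odd (hX : IsCenteredGaussianVector μ X)
    (hmeas : ∀ i, Measurable (X i)) (hn : Odd n) : ∫ ω, ∏ i, X i ω ∂μ = 0 := by
  obtain ⟨r, rfl⟩ := hn
  choose v hv using hX.exists_hasLaw_sum hmeas
  have h := hX.factorial_mul_integral_prod hmeas
  simp_rw [fun T ↦ (hv T).integral_pow_two_mul_add_one_of_gaussianReal r, mul_zero,
    sum_const_zero] at h
  exact (mul_eq_zero.mp h).resolve_left (by positivity)

theorem integral_prod_of_even {r : ℕ} {X : Fin (2 * r) → Ω → ℝ}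
    (hX : IsCenteredGaussianVector μ X) (hmeas : ∀ i, Measurable (X i)) :
    ∫ ω, ∏ i, X i ω ∂μ =
      ∑ σ ∈ Finset.univ.filter (fun σ : Equiv.Perm (Fin (2 * r)) => σ * σ = 1 ∧ ∀ i, σ i ≠ i),
        ∏ i ∈ Finset.univ.filter (fun i => i < σ i), ∫ ω, X i ω * X (σ i) ω ∂μ := by
  choose v hv using hX.exists_hasLaw_sum hmeas
  have hmom (T : Finset (Fin (2 * r))) : ∫ ω, (∑ i ∈ T, X i ω) ^ (2 * r) ∂μ =
      (∑ i ∈ T, ∑ j ∈ T, ∫ ω, X i ω * X j ω ∂μ) ^ r * ((2 * r)! / (2 ^ r * r !)) := by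
    rw [(hv T).integral_pow_two_mul_of_gaussianReal, integral_sum_sq T X fun i _ ↦ by
      simpa only [sum_singleton] using (hv {i}).memLp_two_of_gaussianReal, mul_div_assoc]
  have h := hX.factorial_mul_integral_prod hmeas
  simp only [hmom, ← mul_assoc, ← sum_mul] at h
  rw [sum_neg_one_pow_card_compl_mul_sum_sum_pow (Fintype.card_fin _) _
    fun i j ↦ integral_congr_ae (ae_of_all _ fun ω ↦ mul_comm _ _)] at h
  refine mul_left_cancel₀ (by positivity : ((2 * r)! : ℝ) ≠ 0) (h.trans ?_)
  push_cast
  field_simp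
  -- the two sides differ only in the `Decidable` instances of the filters
  convert rfl using 4

end IsCenteredGaussianVector

end GaussianVector

theorem isserlis_general {Ω : Type*} [MeasurableSpace Ω] (μ : Measure Ω)
    {n : ℕ} (X : Fin n → Ω → ℝ) (hmeas : ∀ i, Measurable (X i))
    (hX : IsCenteredGaussianVector μ X) :
    (∫ ω, ∏ i, X i ω ∂μ =
      ∑ σ ∈ Finset.univ.filter
          (fun σ : Equiv.Perm (Fin n) => σ * σ = 1 ∧ ∀ i, σ i ≠ i),
        ∏ i ∈ Finset.univ.filter (fun i => i < σ i),
          ∫ ω, X i ω * X (σ i) ω ∂μ) ∧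
    (Odd n → ∫ ω, ∏ i, X i ω ∂μ = 0) := by
  refine ⟨?_, hX.integral_prod_eq_zero_of_odd hmeas⟩
  obtain ⟨r, rfl | rfl⟩ := n.even_or_odd'
  · exact hX.integral_prod_of_even hmeas
  · rw [hX.integral_prod_eq_zero_of_odd hmeas (odd_two_mul_add_one r)]
    refine (sum_eq_zero fun σ hσ ↦ absurd ?_ (Nat.not_even_two_mul_add_one r)).symm
    rw [mem_filter] at hσ
    simpa using Equiv.Perm.even_card_of_mul_self_eq_one hσ.2.1 hσ.2.2

/-- **Isserlis' theorem**: the expectation of a product of centered jointly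
Gaussian variables is the sum over all perfect matchings (encoded as
fixed-point-free involutions) of the products of pair covariances.
In particular, for an odd number of variables the expectation is zero. -/
theorem isserlis {Ω : Type*} [MeasurableSpace Ω] (μ : Measure Ω) [IsProbabilityMeasure μ]
    {n : ℕ} (X : Fin n → Ω → ℝ) (hmeas : ∀ i, Measurable (X i))
    (hX : IsCenteredGaussianVector μ X) :
    (∫ ω, ∏ i, X i ω ∂μ =
      ∑ σ ∈ Finset.univ.filter
          (fun σ : Equiv.Perm (Fin n) => σ * σ = 1 ∧ ∀ i, σ i ≠ i),
        ∏ i ∈ Finset.univ.filter (fun i => i < σ i),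
          ∫ ω, X i ω * X (σ i) ω ∂μ) ∧
    (Odd n → ∫ ω, ∏ i, X i ω ∂μ = 0) :=
  isserlis_general μ X hmeas hX
end

section
/- Cyclic-permutation formula for cumulants: let f̃ be a function on permutations multiplicative over cycle decomposition (f̃(σ) = ∏_j f̃(σ_j) for the cycle decomposition σ = σ_1⋯σ_l) and g: ℕ×ℕ → ℝ symmetric. Define F̃(B) = Σ_{σ ∈ S(B)} f̃(σ) ∏_{i∈B} g(i,σ(i)). Then the cumulant function k(A) = Σ_{π∈Π(A)} (|π|−1)!(−1)^{|π|−1} ∏_{B∈π} F̃(B) satisfies k(A) = Σ_{σ cyclic permutation of A} f̃(σ) ∏_{i∈A} g(i,σ(i)). -/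
/-!
Splitting off the cycle through a point shows that `F̃` is the exponential, over set partitions,
of the sum `cyc` over cyclic permutations: `F̃(A) = Σ_{ρ ∈ Π(A)} ∏_{C ∈ ρ} cyc(C)`; the
multiplicativity of `f̃` is what makes the weight factor over the cycles. The cumulant formula is
then Möbius inversion in the partition lattice, which follows from the falling-factorial identity
`Σ_{π ∈ Π(A)} (t)_{|π|} ∏_{B ∈ π} F̃(B) = Σ_{ρ ∈ Π(A)} t^{|ρ|} ∏_{C ∈ ρ} cyc(C)`
by comparing the coefficients of `t`: that of `(t)_k` is `(-1)^{k-1} (k-1)!`, that of `t^k` is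
`[k = 1]`.
-/

open scoped BigOperators Classical

variable {n : ℕ}

/-- `F̃(B) = Σ_{σ ∈ S(B)} f̃(σ) ∏_{i∈B} g(i, σ i)`, the sum running over
permutations supported inside `B`. -/
noncomputable def permMoment (g : Fin n → Fin n → ℝ)
    (ft : Equiv.Perm (Fin n) → ℝ) (B : Finset (Fin n)) : ℝ :=
  ∑ σ ∈ Finset.univ.filter (fun σ : Equiv.Perm (Fin n) => ∀ i ∉ B, σ i = i),
    ft σ * ∏ i ∈ B, g i (σ i)

/-- The set partitions of a finite set `A`. -/
noncomputable def finsetPartitions (A : Finset (Fin n)) :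
    Finset (Finset (Finset (Fin n))) :=
  A.powerset.powerset.filter fun π =>
    (∀ B ∈ π, B.Nonempty) ∧ (∀ B ∈ π, ∀ C ∈ π, B ≠ C → Disjoint B C) ∧
      π.sup id = A

/-- The cumulant function of `F̃` via the moment-cumulant Möbius formula. -/
noncomputable def permCumulant (g : Fin n → Fin n → ℝ)
    (ft : Equiv.Perm (Fin n) → ℝ) (A : Finset (Fin n)) : ℝ :=
  ∑ π ∈ finsetPartitions A,
    ((π.card - 1).factorial : ℝ) * (-1 : ℝ) ^ (π.card - 1) *
      ∏ B ∈ π, permMoment g ft B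

/-- `σ` is a cyclic permutation of `A`: it fixes the complement of `A`
pointwise and acts transitively on `A` (a single cycle covering all of `A`). -/
def IsCyclicOn (σ : Equiv.Perm (Fin n)) (A : Finset (Fin n)) : Prop :=
  (∀ i ∉ A, σ i = i) ∧ ∀ x ∈ A, ∀ y ∈ A, ∃ m : ℕ, (σ ^ m) x = y


open Finset

section SetPartitions

variable {A B C D W : Finset (Fin n)} {π ρ S : Finset (Finset (Fin n))}

theorem mem_finsetPartitions :
    π ∈ finsetPartitions A ↔ (∀ B ∈ π, B.Nonempty) ∧
      (∀ B ∈ π, ∀ C ∈ π, B ≠ C → Disjoint B C) ∧ π.sup id = A := by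
  simp only [finsetPartitions, mem_filter, mem_powerset, and_iff_right_iff_imp]
  rintro ⟨-, -, rfl⟩ B hB
  exact mem_powerset.2 (le_sup (f := id) hB)

theorem subset_of_mem_finsetPartitions (hπ : π ∈ finsetPartitions A) (hB : B ∈ π) :
    B ⊆ A :=
  (mem_finsetPartitions.1 hπ).2.2 ▸ le_sup (f := id) hB

theorem nonempty_of_mem_finsetPartitions (hπ : π ∈ finsetPartitions A) (hB : B ∈ π) :
    B.Nonempty :=
  (mem_finsetPartitions.1 hπ).1 B hB

theorem eq_of_mem_finsetPartitions {x : Fin n} (hπ : π ∈ finsetPartitions A) (hB : B ∈ π)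
    (hC : C ∈ π) (hxB : x ∈ B) (hxC : x ∈ C) : B = C := by
  by_contra h
  exact disjoint_left.1 ((mem_finsetPartitions.1 hπ).2.1 B hB C hC h) hxB hxC

theorem exists_mem_finsetPartitions {x : Fin n} (hπ : π ∈ finsetPartitions A) (hx : x ∈ A) :
    ∃ B ∈ π, x ∈ B := by
  rw [← (mem_finsetPartitions.1 hπ).2.2] at hx
  simpa using mem_sup.1 hx

theorem finsetPartitions_empty : finsetPartitions (∅ : Finset (Fin n)) = {∅} := by
  ext π
  rw [mem_singleton]
  constructor
  · intro hπ
    refine eq_empty_of_forall_notMem fun B hB => ?_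
    obtain ⟨b, hb⟩ := nonempty_of_mem_finsetPartitions hπ hB
    exact notMem_empty b (subset_of_mem_finsetPartitions hπ hB hb)
  · rintro rfl
    simp [mem_finsetPartitions]

theorem singleton_mem_finsetPartitions (hA : A.Nonempty) : {A} ∈ finsetPartitions A := by
  simp [mem_finsetPartitions, hA]

theorem eq_singleton_of_mem_finsetPartitions (hπ : π ∈ finsetPartitions A) (h : #π = 1) :
    π = {A} := by
  obtain ⟨B, rfl⟩ := card_eq_one.1 h
  simpa using (mem_finsetPartitions.1 hπ).2.2

theorem nonempty_of_mem_finsetPartitions_of_nonempty (hA : A.Nonempty)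
    (hπ : π ∈ finsetPartitions A) : π.Nonempty := by
  rw [nonempty_iff_ne_empty]
  rintro rfl
  simp [(mem_finsetPartitions.1 hπ).2.2.symm] at hA

theorem disjoint_of_mem_finsetPartitions (hDE : Disjoint D W) (hπ : π ∈ finsetPartitions D)
    (hρ : ρ ∈ finsetPartitions W) : Disjoint π ρ := by
  refine disjoint_left.2 fun B hBπ hBρ => ?_
  obtain ⟨b, hb⟩ := nonempty_of_mem_finsetPartitions hπ hBπ
  exact disjoint_left.1 hDE (subset_of_mem_finsetPartitions hπ hBπ hb)
    (subset_of_mem_finsetPartitions hρ hBρ hb)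

theorem union_mem_finsetPartitions (hDW : D ⊆ W) (hπ : π ∈ finsetPartitions D)
    (hρ : ρ ∈ finsetPartitions (W \ D)) : π ∪ ρ ∈ finsetPartitions W := by
  have hcross : ∀ B ∈ π, ∀ C ∈ ρ, Disjoint B C := fun B hB C hC =>
    disjoint_of_subset_left (subset_of_mem_finsetPartitions hπ hB)
      (disjoint_of_subset_right (subset_of_mem_finsetPartitions hρ hC) disjoint_sdiff)
  obtain ⟨hπne, hπdisj, hπsup⟩ := mem_finsetPartitions.1 hπ
  obtain ⟨hρne, hρdisj, hρsup⟩ := mem_finsetPartitions.1 hρ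
  refine mem_finsetPartitions.2 ⟨?_, ?_, ?_⟩
  · simp only [mem_union]
    rintro B (hB | hB)
    exacts [hπne B hB, hρne B hB]
  · simp only [mem_union]
    rintro B (hB | hB) C (hC | hC) hBC
    exacts [hπdisj B hB C hC hBC, hcross B hB C hC, (hcross C hC B hB).symm,
      hρdisj B hB C hC hBC]
  · rw [sup_union, hπsup, hρsup, sup_eq_union, union_sdiff_of_subset hDW]

theorem mem_finsetPartitions_sup (hρ : ρ ∈ finsetPartitions W) (hS : S ⊆ ρ) :
    S ∈ finsetPartitions (S.sup id) := by
  obtain ⟨hne, hdisj, -⟩ := mem_finsetPartitions.1 hρ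
  exact mem_finsetPartitions.2
    ⟨fun B hB => hne B (hS hB), fun B hB C hC => hdisj B (hS hB) C (hS hC), rfl⟩

theorem sdiff_mem_finsetPartitions (hρ : ρ ∈ finsetPartitions W) (hS : S ⊆ ρ) :
    ρ \ S ∈ finsetPartitions (W \ S.sup id) := by
  obtain ⟨hne, hdisj, hsup⟩ := mem_finsetPartitions.1 hρ
  have hcross : Disjoint (S.sup id) ((ρ \ S).sup id) := by
    simp only [Finset.disjoint_sup_left, Finset.disjoint_sup_right, id]
    intro C hC B hB
    exact hdisj B (hS hB) C (mem_sdiff.1 hC).1 fun h => (mem_sdiff.1 hC).2 (h ▸ hB)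
  refine mem_finsetPartitions.2 ⟨fun B hB => hne B (mem_sdiff.1 hB).1,
    fun B hB C hC => hdisj B (mem_sdiff.1 hB).1 C (mem_sdiff.1 hC).1, ?_⟩
  have hW : W = S.sup id ∪ (ρ \ S).sup id := by
    rw [← sup_eq_union, ← sup_union, union_sdiff_of_subset hS, hsup]
  rw [hW, union_sdiff_cancel_left hcross]

theorem insert_mem_finsetPartitions (hBA : B ⊆ A) (hB : B.Nonempty)
    (hπ : π ∈ finsetPartitions (A \ B)) : insert B π ∈ finsetPartitions A :=
  insert_eq B π ▸ union_mem_finsetPartitions hBA (singleton_mem_finsetPartitions hB) hπ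

theorem erase_mem_finsetPartitions (hπ : π ∈ finsetPartitions A) (hB : B ∈ π) :
    π.erase B ∈ finsetPartitions (A \ B) := by
  simpa [sdiff_singleton_eq_erase] using
    sdiff_mem_finsetPartitions hπ (singleton_subset_iff.2 hB)

theorem notMem_finsetPartitions_sdiff (hB : B.Nonempty) (hπ : π ∈ finsetPartitions (A \ B)) :
    B ∉ π :=
  disjoint_left.1 (disjoint_of_mem_finsetPartitions disjoint_sdiff
    (singleton_mem_finsetPartitions hB) hπ) (mem_singleton_self B)

end SetPartitions

section Sums

variable {M : Type*} [AddCommMonoid M]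

theorem sum_finsetPartitions_eq_sum_insert {A : Finset (Fin n)} {x : Fin n} (hx : x ∈ A)
    (f : Finset (Finset (Fin n)) → M) :
    ∑ π ∈ finsetPartitions A, f π =
      ∑ B ∈ A.powerset with x ∈ B, ∑ π ∈ finsetPartitions (A \ B), f (insert B π) := by
  rw [sum_sigma']
  symm
  refine sum_bij (fun p _ => insert p.1 p.2) ?_ ?_ ?_ fun _ _ => rfl
  · rintro ⟨B, π⟩ hp
    simp only [mem_sigma, mem_filter, mem_powerset] at hp
    exact insert_mem_finsetPartitions hp.1.1 ⟨x, hp.1.2⟩ hp.2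
  · rintro ⟨B, π⟩ hp ⟨C, ρ⟩ hq h
    simp only [mem_sigma, mem_filter, mem_powerset] at hp hq h
    obtain rfl : B = C := eq_of_mem_finsetPartitions
      (insert_mem_finsetPartitions hp.1.1 ⟨x, hp.1.2⟩ hp.2) (mem_insert_self B π)
      (h ▸ mem_insert_self C ρ) hp.1.2 hq.1.2
    rw [← erase_insert (notMem_finsetPartitions_sdiff ⟨x, hp.1.2⟩ hp.2), h,
      erase_insert (notMem_finsetPartitions_sdiff ⟨x, hp.1.2⟩ hq.2)]
  · intro π hπ
    obtain ⟨B, hB, hxB⟩ := exists_mem_finsetPartitions hπ hx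
    refine ⟨⟨B, π.erase B⟩, ?_, insert_erase hB⟩
    simp only [mem_sigma, mem_filter, mem_powerset]
    exact ⟨⟨subset_of_mem_finsetPartitions hπ hB, hxB⟩, erase_mem_finsetPartitions hπ hB⟩

theorem sum_powerset_sum_finsetPartitions_sdiff (W : Finset (Fin n))
    (F : Finset (Finset (Fin n)) → Finset (Finset (Fin n)) → M) :
    ∑ D ∈ W.powerset, ∑ π ∈ finsetPartitions D, ∑ ρ ∈ finsetPartitions (W \ D),
        F π ρ =
      ∑ τ ∈ finsetPartitions W, ∑ S ∈ τ.powerset, F S (τ \ S) := by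
  simp_rw [← sum_product']
  rw [sum_sigma', sum_sigma']
  symm
  refine sum_nbij' (fun p => ⟨p.2.sup id, (p.2, p.1 \ p.2)⟩)
    (fun p => ⟨p.2.1 ∪ p.2.2, p.2.1⟩)
    ?_ ?_ ?_ ?_ fun _ _ => rfl
  · rintro ⟨τ, S⟩ h
    simp only [mem_sigma, mem_powerset, mem_product] at h ⊢
    exact ⟨Finset.sup_le_iff.2 fun B hB => subset_of_mem_finsetPartitions h.1 (h.2 hB),
      mem_finsetPartitions_sup h.1 h.2, sdiff_mem_finsetPartitions h.1 h.2⟩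
  · rintro ⟨D, π, ρ⟩ h
    simp only [mem_sigma, mem_powerset, mem_product] at h ⊢
    exact ⟨union_mem_finsetPartitions h.1 h.2.1 h.2.2, subset_union_left⟩
  · rintro ⟨τ, S⟩ h
    simp only [mem_sigma, mem_powerset] at h
    simp [union_sdiff_of_subset h.2]
  · rintro ⟨D, π, ρ⟩ h
    simp only [mem_sigma, mem_powerset, mem_product] at h
    obtain rfl : π.sup id = D := (mem_finsetPartitions.1 h.2.1).2.2
    simp [union_sdiff_cancel_left (disjoint_of_mem_finsetPartitions disjoint_sdiff h.2.1 h.2.2)]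

theorem sum_powerset_filter_sum_powerset_filter {α : Type*} [DecidableEq α] (A : Finset α)
    (x : α) (h : Finset α → Finset α → M) :
    ∑ B ∈ A.powerset with x ∈ B, ∑ C ∈ B.powerset with x ∈ C, h C (B \ C) =
      ∑ C ∈ A.powerset with x ∈ C, ∑ D ∈ (A \ C).powerset, h C D := by
  rw [sum_comm' (s' := fun C => Icc C A) (t' := A.powerset.filter (x ∈ ·))]
  · refine sum_congr rfl fun C hC => ?_
    have hdisj : ∀ D ∈ (A \ C).powerset, Disjoint C D := fun D hD =>
      disjoint_of_subset_right (mem_powerset.1 hD) disjoint_sdiff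
    rw [Icc_eq_image_powerset (mem_powerset.1 (mem_filter.1 hC).1), sum_image]
    · exact sum_congr rfl fun D hD => by rw [union_sdiff_cancel_left (hdisj D hD)]
    · intro D hD E hE hDE
      rw [← union_sdiff_cancel_left (hdisj D hD), ← union_sdiff_cancel_left (hdisj E hE)]
      exact congrArg (· \ C) hDE
  · intro B C
    simp only [mem_filter, mem_powerset, mem_Icc]
    constructor
    · rintro ⟨⟨hBA, -⟩, hCB, hxC⟩
      exact ⟨⟨hCB, hBA⟩, hCB.trans hBA, hxC⟩
    · rintro ⟨⟨hCB, hBA⟩, -, hxC⟩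
      exact ⟨⟨hBA, hCB hxC⟩, hCB, hxC⟩

end Sums

section PartitionSum

variable {R : Type*}

/-- The exponential `exp (t • c)` of `c` in the algebra of set functions under subset
convolution. -/
noncomputable def partitionSum [CommSemiring R] (c : Finset (Fin n) → R) (t : R)
    (A : Finset (Fin n)) : R :=
  ∑ ρ ∈ finsetPartitions A, t ^ #ρ * ∏ C ∈ ρ, c C

section CommSemiring

variable [CommSemiring R] (c : Finset (Fin n) → R) (t : R)

@[simp]
theorem partitionSum_empty : partitionSum c t ∅ = 1 := by
  simp [partitionSum, finsetPartitions_empty]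

theorem partitionSum_eq_sum_insert {A : Finset (Fin n)} {x : Fin n} (hx : x ∈ A) :
    partitionSum c t A = ∑ C ∈ A.powerset with x ∈ C, t * c C * partitionSum c t (A \ C) := by
  rw [partitionSum, sum_finsetPartitions_eq_sum_insert hx]
  refine sum_congr rfl fun C hC => ?_
  rw [partitionSum, mul_sum]
  refine sum_congr rfl fun ρ hρ => ?_
  have hCρ := notMem_finsetPartitions_sdiff ⟨x, (mem_filter.1 hC).2⟩ hρ
  rw [card_insert_of_notMem hCρ, prod_insert hCρ, pow_succ]
  ring

theorem sum_powerset_partitionSum_mul (s : R) (W : Finset (Fin n)) :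
    ∑ D ∈ W.powerset, partitionSum c s D * partitionSum c t (W \ D) =
      partitionSum c (s + t) W := by
  simp only [partitionSum, sum_mul_sum]
  rw [sum_powerset_sum_finsetPartitions_sdiff]
  refine sum_congr rfl fun τ _ => ?_
  rw [← sum_pow_mul_eq_add_pow, sum_mul]
  refine sum_congr rfl fun S hS => ?_
  rw [← card_sdiff_of_subset (mem_powerset.1 hS), ← prod_sdiff (mem_powerset.1 hS)]
  ring

theorem partitionSum_map {S : Type*} [CommSemiring S] (f : R →+* S) (A : Finset (Fin n)) :
    partitionSum (fun B => f (c B)) (f t) A = f (partitionSum c t A) := by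
  simp [partitionSum, map_sum, map_prod]

end CommSemiring

variable [CommRing R] (c : Finset (Fin n) → R)

theorem sum_finsetPartitions_descFactorial_mul_prod (A : Finset (Fin n)) (t : R) :
    ∑ π ∈ finsetPartitions A, (∏ i ∈ range #π, (t - i)) * ∏ B ∈ π, partitionSum c 1 B
      = partitionSum c t A := by
  induction A using Finset.strongInduction generalizing t with
  | H A ih =>
    rcases A.eq_empty_or_nonempty with rfl | ⟨x, hx⟩
    · simp [finsetPartitions_empty]
    have hsub : ∀ B ∈ A.powerset.filter (x ∈ ·), A \ B ⊂ A := fun B hB =>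
      sdiff_ssubset (mem_powerset.1 (mem_filter.1 hB).1) ⟨x, (mem_filter.1 hB).2⟩
    calc _ = ∑ B ∈ A.powerset with x ∈ B, t * (partitionSum c 1 B *
            ∑ π ∈ finsetPartitions (A \ B),
              (∏ i ∈ range #π, (t - 1 - i)) * ∏ B' ∈ π, partitionSum c 1 B') := by
          rw [sum_finsetPartitions_eq_sum_insert hx]
          refine sum_congr rfl fun B hB => ?_
          rw [mul_sum, mul_sum]
          refine sum_congr rfl fun π hπ => ?_
          have hBπ := notMem_finsetPartitions_sdiff ⟨x, (mem_filter.1 hB).2⟩ hπ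
          rw [card_insert_of_notMem hBπ, prod_insert hBπ, prod_range_succ']
          push_cast
          simp only [sub_add_eq_sub_sub_swap, sub_zero]
          ring
      _ = ∑ B ∈ A.powerset with x ∈ B,
            t * (partitionSum c 1 B * partitionSum c (t - 1) (A \ B)) :=
          sum_congr rfl fun B hB => by rw [ih _ (hsub B hB)]
      _ = ∑ B ∈ A.powerset with x ∈ B, ∑ C ∈ B.powerset with x ∈ C,
            t * c C * (partitionSum c 1 (B \ C) * partitionSum c (t - 1) ((A \ C) \ (B \ C))) := by
          refine sum_congr rfl fun B hB => ?_
          rw [partitionSum_eq_sum_insert c 1 (mem_filter.1 hB).2, sum_mul, mul_sum]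
          refine sum_congr rfl fun C hC => ?_
          rw [sdiff_sdiff_sdiff_cancel_right (mem_powerset.1 (mem_filter.1 hC).1)]
          ring
      _ = ∑ C ∈ A.powerset with x ∈ C, t * c C * partitionSum c t (A \ C) := by
          rw [sum_powerset_filter_sum_powerset_filter A x fun C D =>
            t * c C * (partitionSum c 1 D * partitionSum c (t - 1) ((A \ C) \ D))]
          refine sum_congr rfl fun C _ => ?_
          rw [← mul_sum, sum_powerset_partitionSum_mul, add_sub_cancel]
      _ = partitionSum c t A := (partitionSum_eq_sum_insert c t hx).symm

end PartitionSum

section Cumulant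

open Polynomial
open scoped Nat

variable {R : Type*} [CommRing R]

theorem prod_range_neg_one_sub_natCast (m : ℕ) :
    ∏ i ∈ range m, (-1 - (i : R)) = m ! * (-1) ^ m := by
  induction m with
  | zero => simp
  | succ m ih =>
    rw [prod_range_succ, ih, Nat.factorial_succ]
    push_cast
    ring

/-- Möbius inversion in the lattice of set partitions: the coefficient of `t` in
`sum_finsetPartitions_descFactorial_mul_prod`, read off at `t = X` after dividing by `X`. -/
theorem sum_finsetPartitions_mobius_mul_prod_partitionSum (c : Finset (Fin n) → R)
    {A : Finset (Fin n)} (hA : A.Nonempty) :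
    ∑ π ∈ finsetPartitions A,
      ((#π - 1)! : R) * (-1) ^ (#π - 1) * ∏ B ∈ π, partitionSum c 1 B = c A := by
  have hcard : ∀ π ∈ finsetPartitions A, #π = #π - 1 + 1 := fun π hπ =>
    (Nat.sub_add_cancel (card_pos.2 (nonempty_of_mem_finsetPartitions_of_nonempty hA hπ))).symm
  have hC : ∀ B, partitionSum (fun B => C (c B)) 1 B = C (partitionSum c 1 B) := fun B => by
    rw [← partitionSum_map, map_one]
  have hX : ∑ π ∈ finsetPartitions A,
        (∏ i ∈ range (#π - 1), (X - 1 - (i : R[X]))) * ∏ B ∈ π, C (partitionSum c 1 B) =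
      ∑ ρ ∈ finsetPartitions A, X ^ (#ρ - 1) * ∏ B ∈ ρ, C (c B) := by
    apply isRegular_X.left
    have key := sum_finsetPartitions_descFactorial_mul_prod (fun B => C (c B)) A X
    simp only [hC] at key
    rw [partitionSum] at key
    simp only [mul_sum]
    convert key using 1 <;> refine sum_congr rfl fun π hπ => ?_
    · rw [hcard π hπ, prod_range_succ', add_tsub_cancel_right]
      push_cast
      simp only [sub_add_eq_sub_sub_swap, sub_zero]
      ring
    · rw [hcard π hπ, pow_succ, add_tsub_cancel_right]
      ring
  have h0 := congrArg (eval 0) hX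
  simp only [eval_finsetSum, eval_mul, eval_prod, eval_sub, eval_X, eval_one, eval_natCast,
    eval_C, eval_pow, zero_sub, prod_range_neg_one_sub_natCast] at h0
  rw [h0, sum_eq_single_of_mem {A} (singleton_mem_finsetPartitions hA)]
  · simp
  · intro ρ hρ hne
    have h1 := hcard ρ hρ
    have : #ρ - 1 ≠ 0 := fun h =>
      hne (eq_singleton_of_mem_finsetPartitions hρ (by omega))
    simp [this]

end Cumulant

section Permutations

open Equiv Equiv.Perm

variable {σ τ σ' : Perm (Fin n)} {A B : Finset (Fin n)} {x : Fin n}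

theorem IsCyclicOn.apply_mem (h : IsCyclicOn τ B) {i : Fin n} (hi : i ∈ B) : τ i ∈ B := by
  by_contra hτi
  have hfix : τ i = i := τ.injective (h.1 _ hτi)
  exact hτi (by rwa [hfix])

theorem isCyclicOn_cycleOf (σ : Perm (Fin n)) (x : Fin n) :
    IsCyclicOn (σ.cycleOf x) (univ.filter (σ.SameCycle x)) := by
  refine ⟨fun i hi => cycleOf_apply_of_not_sameCycle (by simpa using hi), fun a ha b hb => ?_⟩
  simp only [mem_filter, mem_univ, true_and] at ha hb
  obtain ⟨m, hm⟩ := (ha.symm.trans hb).exists_nat_pow_eq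
  exact ⟨m, by rw [ha.cycleOf_eq, cycleOf_pow_apply_self, hm]⟩

theorem mul_cycleOf_inv_apply (σ : Perm (Fin n)) (x i : Fin n) :
    (σ * (σ.cycleOf x)⁻¹) i = if σ.SameCycle x i then i else σ i := by
  rw [cycleOf_inv, mul_apply, cycleOf_apply]
  by_cases h : σ.SameCycle x i
  · simp [sameCycle_inv.2 h, h]
  · simp [mt sameCycle_inv.1 h, h]

theorem sameCycle_mul_iff_and_cycleOf_mul (hτ : IsCyclicOn τ B) (hx : x ∈ B)
    (hσ' : ∀ i ∈ B, σ' i = i) :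
    (∀ y, (σ' * τ).SameCycle x y ↔ y ∈ B) ∧ (σ' * τ).cycleOf x = τ := by
  have hagree : ∀ i ∈ B, (σ' * τ) i = τ i := fun i hi => hσ' _ (hτ.apply_mem hi)
  have hpow : ∀ m : ℕ, ((σ' * τ) ^ m) x = (τ ^ m) x ∧ (τ ^ m) x ∈ B := by
    intro m
    induction m with
    | zero => exact ⟨rfl, hx⟩
    | succ m ih =>
      rw [pow_succ', pow_succ', mul_apply, mul_apply τ, ih.1, hagree _ ih.2]
      exact ⟨rfl, hτ.apply_mem ih.2⟩
  have horbit : ∀ y, (σ' * τ).SameCycle x y ↔ y ∈ B := by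
    refine fun y => ⟨fun h => ?_, fun hy => ?_⟩
    · obtain ⟨m, rfl⟩ := h.exists_nat_pow_eq
      exact (hpow m).1 ▸ (hpow m).2
    · obtain ⟨m, rfl⟩ := hτ.2 x hx y hy
      exact (hpow m).1 ▸ sameCycle_pow_right.2 (SameCycle.refl _ _)
  refine ⟨horbit, Equiv.ext fun i => ?_⟩
  rw [cycleOf_apply]
  split_ifs with hi
  · exact hagree i ((horbit i).1 hi)
  · exact (hτ.1 i (mt (horbit i).2 hi)).symm

theorem filter_sameCycle_subset (hσ : ∀ i ∉ A, σ i = i) (hx : x ∈ A) :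
    univ.filter (σ.SameCycle x) ⊆ A := fun y hy => by
  by_contra hyA
  exact hyA ((SameCycle.eq_of_left (mem_filter.1 hy).2.symm (hσ y hyA)) ▸ hx)

theorem eq_mul_of_forall_eq_prod_cycleFactorsFinset {f : Perm (Fin n) → ℝ}
    (hf : ∀ σ : Perm (Fin n), f σ = ∏ c ∈ σ.cycleFactorsFinset, f c) (σ : Perm (Fin n))
    (x : Fin n) : f σ = f (σ.cycleOf x) * f (σ * (σ.cycleOf x)⁻¹) := by
  by_cases hσx : σ x = x
  · rw [(cycleOf_eq_one_iff σ).2 hσx, hf 1]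
    simp
  · have hmem := cycleOf_mem_cycleFactorsFinset_iff.2 (mem_support.2 hσx)
    rw [hf σ, hf (σ * _), cycleFactorsFinset_mul_inv_mem_eq_sdiff hmem,
      sdiff_singleton_eq_erase, mul_prod_erase _ _ hmem]

variable (g : Fin n → Fin n → ℝ) (ft : Perm (Fin n) → ℝ)

noncomputable def cyclicPermSum (A : Finset (Fin n)) : ℝ :=
  ∑ σ ∈ Finset.univ.filter (fun σ : Equiv.Perm (Fin n) => IsCyclicOn σ A),
    ft σ * ∏ i ∈ A, g i (σ i)

/-- `σ ↦ (orbit of x, σ.cycleOf x, σ * (σ.cycleOf x)⁻¹)` is a bijection, and `ft` factors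
along it by multiplicativity over cycles. -/
theorem permMoment_eq_sum_insert
    (hft : ∀ σ : Perm (Fin n), ft σ = ∏ c ∈ σ.cycleFactorsFinset, ft c) (hx : x ∈ A) :
    permMoment g ft A =
      ∑ B ∈ A.powerset with x ∈ B, cyclicPermSum g ft B * permMoment g ft (A \ B) := by
  simp only [cyclicPermSum, permMoment, sum_mul_sum, ← sum_product']
  rw [sum_sigma']
  refine sum_nbij'
    (fun σ => ⟨univ.filter (σ.SameCycle x), (σ.cycleOf x, σ * (σ.cycleOf x)⁻¹)⟩)
    (fun p => p.2.2 * p.2.1) ?_ ?_ (fun σ _ => inv_mul_cancel_right σ _) ?_ ?_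
  · intro σ hσ
    simp only [mem_filter, mem_univ, true_and] at hσ
    simp only [mem_sigma, mem_filter, mem_powerset, mem_product, mem_univ, true_and]
    refine ⟨⟨filter_sameCycle_subset hσ hx, SameCycle.refl σ x⟩, isCyclicOn_cycleOf σ x,
      fun i hi => ?_⟩
    rw [mul_cycleOf_inv_apply]
    split_ifs with h
    · rfl
    · exact hσ i fun hiA => hi (mem_sdiff.2 ⟨hiA, by simpa using h⟩)
  · rintro ⟨B, τ, σ'⟩ h
    simp only [mem_sigma, mem_filter, mem_powerset, mem_product, mem_univ, true_and] at h ⊢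
    intro i hi
    rw [mul_apply, h.2.1.1 i fun hiB => hi (h.1.1 hiB), h.2.2 i fun hiA => hi (mem_sdiff.1 hiA).1]
  · rintro ⟨B, τ, σ'⟩ h
    simp only [mem_sigma, mem_filter, mem_powerset, mem_product, mem_univ, true_and] at h
    obtain ⟨horbit, hcyc⟩ := sameCycle_mul_iff_and_cycleOf_mul h.2.1 h.1.2
      fun i hi => h.2.2 i fun hi' => (mem_sdiff.1 hi').2 hi
    refine Sigma.ext (by ext y; simp [horbit]) (heq_of_eq ?_)
    simp only [hcyc, mul_inv_cancel_right]
  · intro σ hσ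
    simp only [mem_filter, mem_univ, true_and] at hσ
    have hrest : ∀ i ∈ A \ univ.filter (σ.SameCycle x), σ i = (σ * (σ.cycleOf x)⁻¹) i :=
      fun i hi => by simp_all [mul_cycleOf_inv_apply]
    have hcyc : ∀ i ∈ univ.filter (σ.SameCycle x), σ i = σ.cycleOf x i :=
      fun i hi => ((mem_filter.1 hi).2.cycleOf_apply).symm
    rw [eq_mul_of_forall_eq_prod_cycleFactorsFinset hft σ x,
      ← prod_sdiff (filter_sameCycle_subset hσ hx),
      prod_congr rfl fun i hi => congrArg (g i) (hrest i hi),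
      prod_congr rfl fun i hi => congrArg (g i) (hcyc i hi)]
    ring

theorem permMoment_empty
    (hft : ∀ σ : Perm (Fin n), ft σ = ∏ c ∈ σ.cycleFactorsFinset, ft c) :
    permMoment g ft ∅ = 1 := by
  have h : univ.filter (fun σ : Perm (Fin n) => ∀ i ∉ (∅ : Finset (Fin n)), σ i = i) =
      {1} := by
    ext σ
    simp [Perm.ext_iff]
  rw [permMoment, h, sum_singleton, hft 1]
  simp

theorem cyclicPermSum_empty
    (hft : ∀ σ : Perm (Fin n), ft σ = ∏ c ∈ σ.cycleFactorsFinset, ft c) :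
    cyclicPermSum g ft ∅ = 1 := by
  have h : univ.filter (fun σ : Perm (Fin n) => IsCyclicOn σ ∅) = {1} := by
    ext σ
    simp [IsCyclicOn, Perm.ext_iff]
  rw [cyclicPermSum, h, sum_singleton, hft 1]
  simp

theorem permMoment_eq_partitionSum
    (hft : ∀ σ : Perm (Fin n), ft σ = ∏ c ∈ σ.cycleFactorsFinset, ft c)
    (A : Finset (Fin n)) : permMoment g ft A = partitionSum (cyclicPermSum g ft) 1 A := by
  induction A using Finset.strongInduction with
  | H A ih =>
    rcases A.eq_empty_or_nonempty with rfl | ⟨x, hx⟩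
    · rw [permMoment_empty g ft hft, partitionSum_empty]
    rw [permMoment_eq_sum_insert g ft hft hx, partitionSum_eq_sum_insert _ _ hx]
    refine sum_congr rfl fun B hB => ?_
    obtain ⟨hBA, hxB⟩ := mem_filter.1 hB
    rw [one_mul, ih _ (sdiff_ssubset (mem_powerset.1 hBA) ⟨x, hxB⟩)]

end Permutations

theorem cumulant_cyclic_permutations_general (g : Fin n → Fin n → ℝ)
    (ft : Equiv.Perm (Fin n) → ℝ)
    (hft : ∀ σ : Equiv.Perm (Fin n), ft σ = ∏ c ∈ σ.cycleFactorsFinset, ft c)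
    (A : Finset (Fin n)) :
    permCumulant g ft A =
      ∑ σ ∈ Finset.univ.filter (fun σ : Equiv.Perm (Fin n) => IsCyclicOn σ A),
        ft σ * ∏ i ∈ A, g i (σ i) := by
  change permCumulant g ft A = cyclicPermSum g ft A
  rcases A.eq_empty_or_nonempty with rfl | hA
  · simp [permCumulant, finsetPartitions_empty, cyclicPermSum_empty g ft hft]
  simp only [permCumulant, permMoment_eq_partitionSum g ft hft]
  exact sum_finsetPartitions_mobius_mul_prod_partitionSum _ hA

/-- **Cyclic-permutation formula for cumulants**: if `f̃` is multiplicative over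
the cycle decomposition and `g` is symmetric, the cumulant function of
`F̃(B) = Σ_{σ∈S(B)} f̃(σ) ∏ g(i,σ i)` equals the same sum restricted to cyclic
permutations of `A`. -/
theorem cumulant_cyclic_permutations (g : Fin n → Fin n → ℝ)
    (hg : ∀ i j, g i j = g j i) (ft : Equiv.Perm (Fin n) → ℝ)
    (hft : ∀ σ : Equiv.Perm (Fin n), ft σ = ∏ c ∈ σ.cycleFactorsFinset, ft c)
    (A : Finset (Fin n)) :
    permCumulant g ft A =
      ∑ σ ∈ Finset.univ.filter (fun σ : Equiv.Perm (Fin n) => IsCyclicOn σ A),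
        ft σ * ∏ i ∈ A, g i (σ i) :=
  cumulant_cyclic_permutations_general g ft hft A
end

section
/- Fermionic Wick theorem for pairs: let C be an invertible m×m real matrix, and define the fermionic Gaussian state ⟨F⟩_C = det(C)^{-1} ∫ ∂ψ_1∂ψ̄_1⋯∂ψ_m∂ψ̄_m F exp(ψ̄^T C ψ). Then for any subset A ⊂ [m] (with indices ordered), ⟨∏_{i∈A} ψ̄_i ψ_i⟩_C = det((C^{-T})_{AA}), the principal minor of the inverse-transpose of C indexed by A. -/
open scoped BigOperators Classical

/-!
Expanding the exponential, only the term of degree `n = |Sᶜ|` survives the Berezin integral: a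
monomial `∏ₜ ψ̄_{aₜ} ψ_{jₜ}` times the pairs over `S` is killed unless `a` and `j` both enumerate
`Sᶜ`, and then bringing `j` into the order of `a` costs the sign of the permutation relating them,
because products of generators along words factor through the exterior algebra and are therefore
alternating. The `n!` orderings of `a` cancel the `1/n!`, and the signed sum over the permutations
is `det C_{SᶜSᶜ}`. Jacobi's complementary minor identity `det C · det (C⁻¹)_{SS} = det C_{SᶜSᶜ}`
finishes the proof.
-/

theorem List.prod_ofFn_comp_of_bijective {M : Type*} [Monoid M] {N m : ℕ} {f : Fin m → M}
    (hf : ∀ i j, Commute (f i) (f j)) {e : Fin N → Fin m} (he : Function.Bijective e) :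
    (List.ofFn fun t => f (e t)).prod = (List.ofFn f).prod := by
  have hperm : (List.ofFn e).Perm (List.finRange m) :=
    (List.perm_ext_iff_of_nodup (List.nodup_ofFn.2 he.1) (List.nodup_finRange m)).2
      fun x => by simpa [List.mem_ofFn] using he.2 x
  rw [← Function.comp_def, ← List.map_ofFn, List.ofFn_eq_map (f := f)]
  exact (hperm.map f).prod_eq'
    (List.pairwise_map.2 (List.pairwise_of_forall_mem_list fun i _ j _ => hf i j))

theorem Fin.exists_equiv_of_bijective_append {α : Type*} {p q : ℕ} {u : Fin p → α}
    {v : Fin q → α} (h : Function.Bijective (Fin.append u v)) {P : α → Prop}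
    (hu : ∀ x, P x ↔ x ∈ Set.range u) : ∃ τ : Fin q ≃ {x // ¬ P x}, ∀ t, (τ t : α) = v t := by
  obtain ⟨-, hv, hdisj⟩ := Fin.append_injective_iff.1 h.1
  have hvP : ∀ t, ¬ P (v t) := fun t hvt => by
    obtain ⟨i, hi⟩ := (hu _).1 hvt
    exact hdisj i t hi
  refine ⟨Equiv.ofBijective (fun t => ⟨v t, hvP t⟩)
    ⟨fun t t' htt' => hv (congrArg Subtype.val htt'), fun ⟨x, hx⟩ => ?_⟩, fun t => rfl⟩
  obtain ⟨i, hi⟩ := h.2 x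
  induction i using Fin.addCases with
  | left i => exact absurd ((hu x).2 ⟨i, by simpa using hi⟩) hx
  | right t => exact ⟨t, Subtype.ext (by simpa using hi)⟩

theorem Fin.bijective_append_of_equiv {α : Type*} {p q : ℕ} {u : Fin p → α}
    (hu : Function.Injective u) {P : α → Prop} (hP : ∀ x, P x ↔ x ∈ Set.range u)
    (τ : Fin q ≃ {x // ¬ P x}) :
    Function.Bijective (Fin.append u fun t => (τ t : α)) := by
  refine ⟨Fin.append_injective_iff.2 ⟨hu, Subtype.val_injective.comp τ.injective,
    fun i t hit => (τ t).2 ((hP _).2 ⟨i, hit⟩)⟩, fun x => ?_⟩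
  by_cases hx : P x
  · obtain ⟨i, rfl⟩ := (hP x).1 hx
    exact ⟨Fin.castAdd q i, by simp⟩
  · exact ⟨Fin.natAdd p (τ.symm ⟨x, hx⟩), by simp⟩

theorem Matrix.sum_perm_prod_mul_sign_eq_det_submatrix {R n κ ι : Type*} [CommRing R]
    [Fintype κ] [DecidableEq κ] [Fintype ι] [DecidableEq ι] (M : Matrix n n R) (f : ι → n)
    (e : κ ≃ ι) :
    ∑ π : Equiv.Perm κ, (∏ t, M (f (e t)) (f (e (π t)))) * (Equiv.Perm.sign π : R) =
      (M.submatrix f f).det := by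
  rw [← Matrix.det_submatrix_equiv_self e, ← Matrix.det_transpose, Matrix.det_apply']
  simp [mul_comm]

theorem Matrix.det_mul_det_inv_submatrix {R n : Type*} [CommRing R] [Fintype n] [DecidableEq n]
    (C : Matrix n n R) (hC : IsUnit C.det) (S : Finset n) :
    C.det * (C⁻¹.submatrix (fun a : {x // x ∈ S} => (a : n))
        (fun a : {x // x ∈ S} => (a : n))).det =
      (C.submatrix (fun a : {x // x ∉ S} => (a : n)) (fun a : {x // x ∉ S} => (a : n))).det := by
  set e := Equiv.sumCompl (· ∈ S)
  set M := C.submatrix e e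
  set D := C⁻¹.submatrix e e
  have hprod : M * D = 1 := by
    rw [Matrix.submatrix_mul_equiv, Matrix.mul_nonsing_inv C hC, Matrix.submatrix_one_equiv]
  rw [← Matrix.fromBlocks_toBlocks M, ← Matrix.fromBlocks_toBlocks D,
    Matrix.fromBlocks_multiply, ← Matrix.fromBlocks_one, Matrix.fromBlocks_inj] at hprod
  -- multiplying `M` by the first block column of `D = M⁻¹` makes it block upper triangular
  have hMN : M * Matrix.fromBlocks D.toBlocks₁₁ 0 D.toBlocks₂₁ 1 =
      Matrix.fromBlocks 1 M.toBlocks₁₂ 0 M.toBlocks₂₂ := by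
    conv_lhs => rw [← Matrix.fromBlocks_toBlocks M]
    rw [Matrix.fromBlocks_multiply, hprod.1, hprod.2.2.1]
    simp
  have hdet := congrArg Matrix.det hMN
  rwa [Matrix.det_mul, Matrix.det_fromBlocks_zero₂₁, Matrix.det_fromBlocks_zero₁₂,
    Matrix.det_one, Matrix.det_one, one_mul, mul_one, Matrix.det_submatrix_equiv_self] at hdet

theorem sum_range_inv_factorial_mul_card_equiv {K α : Type*} [Field K] [CharZero K]
    [Fintype α] [DecidableEq α] {m : ℕ} (hm : Fintype.card α ≤ m) :
    ∑ k ∈ Finset.range (m + 1), (k.factorial : K)⁻¹ * Fintype.card (Fin k ≃ α) = 1 := by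
  rw [Finset.sum_eq_single_of_mem (Fintype.card α) (Finset.mem_range.2 (by omega))]
  · rw [Fintype.card_equiv (Fintype.equivFin α).symm, Fintype.card_fin]
    exact inv_mul_cancel₀ (Nat.cast_ne_zero.2 (Nat.factorial_ne_zero _))
  · intro k _ hk
    have : IsEmpty (Fin k ≃ α) := ⟨fun e => hk (by simpa using Fintype.card_congr e)⟩
    simp

namespace Grassmann

variable {A : Type*} [Ring A]

section Words

variable {ι : Type*}

def wordProd (γ : ι → A) {n : ℕ} (w : Fin n → ι) : A :=
  (List.ofFn fun i => γ (w i)).prod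

variable {γ : ι → A} (hanti : ∀ s t, γ s * γ t = -(γ t * γ s)) (hsq : ∀ s, γ s * γ s = 0)

include hanti in
theorem mul_mul_commute (s t u : ι) : Commute (γ s * γ t) (γ u) := by
  rw [commute_iff_eq, mul_assoc, hanti t u, mul_neg, ← mul_assoc, hanti s u, neg_mul, neg_neg,
    mul_assoc]

include hanti hsq

theorem linearCombination_mul_self_eq_zero (c : ι →₀ ℤ) :
    Finsupp.linearCombination ℤ γ c * Finsupp.linearCombination ℤ γ c = 0 := by
  rw [Finsupp.linearCombination_apply, Finsupp.sum, Finset.sum_mul_sum, ← Finset.sum_product']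
  refine Finset.sum_involution (fun p _ => p.swap) (fun p _ => ?_) (fun p _ hp hswap => ?_)
    (fun p hp => Finset.mem_product.2 (Finset.mem_product.1 hp).symm) (fun p _ => rfl)
  · simp only [Prod.fst_swap, Prod.snd_swap, smul_mul_smul_comm, hanti p.2 p.1, smul_neg,
      mul_comm (c p.2)]
    exact add_neg_cancel _
  · obtain ⟨s, t⟩ := p
    obtain rfl : t = s := congrArg Prod.fst hswap
    exact hp (by simp only [smul_mul_smul_comm, hsq, smul_zero])

noncomputable def wordMap (n : ℕ) : (ι →₀ ℤ) [⋀^Fin n]→ₗ[ℤ] A :=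
  (ExteriorAlgebra.lift ℤ ⟨Finsupp.linearCombination ℤ γ,
    linearCombination_mul_self_eq_zero hanti hsq⟩).toLinearMap.compAlternatingMap
    (ExteriorAlgebra.ιMulti ℤ n)

theorem wordMap_single {n : ℕ} (w : Fin n → ι) :
    wordMap hanti hsq n (fun i => Finsupp.single (w i) 1) = wordProd γ w := by
  simp [wordMap, ExteriorAlgebra.ιMulti_apply, wordProd, map_list_prod, List.map_ofFn,
    Function.comp_def]

theorem wordProd_eq_zero_of_not_injective {n : ℕ} {w : Fin n → ι}
    (hw : ¬ Function.Injective w) : wordProd γ w = 0 := by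
  rw [← wordMap_single hanti hsq]
  exact AlternatingMap.map_eq_zero_of_not_injective _ _
    fun h => hw (Function.Injective.of_comp (f := fun s => Finsupp.single s (1 : ℤ)) h)

theorem wordProd_comp_perm {n : ℕ} (w : Fin n → ι) (σ : Equiv.Perm (Fin n)) :
    wordProd γ (w ∘ σ) = Equiv.Perm.sign σ • wordProd γ w := by
  rw [← wordMap_single hanti hsq, ← wordMap_single hanti hsq, ← AlternatingMap.map_perm]
  rfl

end Words

section Pairs

variable {m N : ℕ} (ψ ψb : Fin m → A)

def pairProd (a j : Fin N → Fin m) : A :=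
  (List.ofFn fun t => ψb (a t) * ψ (j t)).prod

-- Letter `b` of the `t`-th pair `ψ̄_{a t} ψ_{j t}`, where `inl` names a `ψ` and `inr` a `ψ̄`;
-- it is letter `2 t + b` of the word `pairWord a j`.
def pairLetter (a j : Fin N → Fin m) (p : Fin N × Fin 2) : Fin m ⊕ Fin m :=
  ![Sum.inr (a p.1), Sum.inl (j p.1)] p.2

def pairWord (a j : Fin N → Fin m) (p : Fin (N * 2)) : Fin m ⊕ Fin m :=
  pairLetter a j (finProdFinEquiv.symm p)

theorem pairProd_eq_wordProd (a j : Fin N → Fin m) :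
    pairProd ψ ψb a j = wordProd (Sum.elim ψ ψb) (pairWord a j) := by
  rw [wordProd, List.ofFn_mul, List.prod_flatten, List.map_ofFn, pairProd]
  congr 1
  refine List.ofFn_inj.2 (funext fun t => ?_)
  have : (t * 2 + 1 : ℕ) / 2 = t := by omega
  simp [pairWord, pairLetter, Fin.divNat, Fin.modNat, this]

theorem bijective_of_bijective_pairLetter {a j : Fin N → Fin m}
    (h : Function.Bijective (pairLetter a j)) : Function.Bijective a ∧ Function.Bijective j := by
  obtain ⟨hinj, hsurj⟩ := h
  refine ⟨⟨fun t t' h => ?_, fun x => ?_⟩, ⟨fun t t' h => ?_, fun x => ?_⟩⟩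
  · simpa using @hinj (t, 0) (t', 0) (by simp [pairLetter, h])
  · obtain ⟨⟨t, b⟩, h⟩ := hsurj (Sum.inr x)
    fin_cases b
    · exact ⟨t, by simpa [pairLetter] using h⟩
    · simp [pairLetter] at h
  · simpa using @hinj (t, 1) (t', 1) (by simp [pairLetter, h])
  · obtain ⟨⟨t, b⟩, h⟩ := hsurj (Sum.inl x)
    fin_cases b
    · simp [pairLetter] at h
    · exact ⟨t, by simpa [pairLetter] using h⟩

-- Applies `π` to the `ψ`-letters of a pair word and fixes its `ψ̄`-letters.
def liftPerm (π : Equiv.Perm (Fin N)) : Equiv.Perm (Fin (N * 2)) :=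
  finProdFinEquiv.permCongr ((Equiv.prodComm _ _).permCongr (Equiv.Perm.prodExtendRight 1 π))

theorem sign_liftPerm (π : Equiv.Perm (Fin N)) :
    Equiv.Perm.sign (liftPerm π) = Equiv.Perm.sign π := by
  simp [liftPerm, Equiv.Perm.sign_permCongr, Equiv.Perm.sign_prodExtendRight]

theorem pairWord_comp_perm (a j : Fin N → Fin m) (π : Equiv.Perm (Fin N)) :
    pairWord a (j ∘ π) = pairWord a j ∘ liftPerm π := by
  funext p
  obtain ⟨⟨t, b⟩, rfl⟩ := finProdFinEquiv.surjective p
  simp only [pairWord, liftPerm, Function.comp_apply, Equiv.permCongr_apply,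
    Equiv.symm_apply_apply, Equiv.prodComm_symm, Equiv.prodComm_apply, Prod.swap_prod_mk]
  fin_cases b <;> simp [pairLetter, Equiv.Perm.prodExtendRight]

theorem pairProd_append {N' : ℕ} (a j : Fin N → Fin m) (a' j' : Fin N' → Fin m) :
    pairProd ψ ψb (Fin.append a a') (Fin.append j j') =
      pairProd ψ ψb a j * pairProd ψ ψb a' j' := by
  simp [pairProd, List.ofFn_add, List.prod_append]

variable {ψ ψb} (hanti : ∀ s t : Fin m ⊕ Fin m,
      Sum.elim ψ ψb s * Sum.elim ψ ψb t = -(Sum.elim ψ ψb t * Sum.elim ψ ψb s))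
    (hsq : ∀ s : Fin m ⊕ Fin m, Sum.elim ψ ψb s * Sum.elim ψ ψb s = 0)

include hanti in
theorem pairProd_self_of_bijective {e : Fin N → Fin m} (he : Function.Bijective e) :
    pairProd ψ ψb e e = (List.ofFn fun i => ψb i * ψ i).prod :=
  List.prod_ofFn_comp_of_bijective (fun i j =>
    (mul_mul_commute hanti (.inr i) (.inl i) (.inr j)).mul_right
      (mul_mul_commute hanti (.inr i) (.inl i) (.inl j))) he

include hanti hsq

theorem pairProd_comp_perm (a j : Fin N → Fin m) (π : Equiv.Perm (Fin N)) :
    pairProd ψ ψb a (j ∘ π) = Equiv.Perm.sign π • pairProd ψ ψb a j := by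
  rw [pairProd_eq_wordProd, pairProd_eq_wordProd, pairWord_comp_perm,
    wordProd_comp_perm hanti hsq, sign_liftPerm]

theorem bijective_of_berezin_pairProd_ne_zero {K : Type*} [CommRing K] [Algebra K A]
    (B : A →ₗ[K] K)
    (hB0 : ∀ l : List (Fin m ⊕ Fin m), (∃ s, s ∉ l) → B (l.map (Sum.elim ψ ψb)).prod = 0)
    {a j : Fin N → Fin m} (h : B (pairProd ψ ψb a j) ≠ 0) :
    Function.Bijective a ∧ Function.Bijective j := by
  rw [pairProd_eq_wordProd] at h
  have hw : Function.Bijective (pairWord a j) := by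
    refine ⟨?_, fun s => ?_⟩
    · by_contra hinj
      exact h (by rw [wordProd_eq_zero_of_not_injective hanti hsq hinj, map_zero])
    · by_contra hs
      refine h ?_
      simpa [wordProd, List.map_ofFn, Function.comp_def] using
        hB0 (List.ofFn (pairWord a j)) ⟨s, by simpa [List.mem_ofFn] using hs⟩
  exact bijective_of_bijective_pairLetter ((Equiv.bijective_comp finProdFinEquiv.symm _).1 hw)

end Pairs

section Gaussian

variable {K : Type*} [CommRing K] [Algebra K A] {m : ℕ} (ψ ψb : Fin m → A)

theorem sum_sum_smul_mul_pow (C : Matrix (Fin m) (Fin m) K) (k : ℕ) :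
    (∑ i, ∑ j, C i j • (ψb i * ψ j)) ^ k =
      ∑ r : Fin k → Fin m × Fin m,
        (∏ t, C (r t).1 (r t).2) • pairProd ψ ψb (fun t => (r t).1) (fun t => (r t).2) := by
  rw [← Fintype.sum_prod_type', ← MultilinearMap.mkPiAlgebraFin_apply_const (R := K),
    MultilinearMap.map_sum]
  simp_rw [MultilinearMap.map_smul_univ, MultilinearMap.mkPiAlgebraFin_apply]
  rfl

theorem prod_sort_map_eq_pairProd (S : Finset (Fin m)) :
    ((S.sort (· ≤ ·)).map fun i => ψb i * ψ i).prod =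
      pairProd ψ ψb (S.orderEmbOfFin rfl) (S.orderEmbOfFin rfl) := by
  rw [← S.listMap_orderEmbOfFin_finRange rfl, List.map_map, ← List.ofFn_eq_map]
  rfl

variable {ψ ψb} (hanti : ∀ s t : Fin m ⊕ Fin m,
      Sum.elim ψ ψb s * Sum.elim ψ ψb t = -(Sum.elim ψ ψb t * Sum.elim ψ ψb s))
    (hsq : ∀ s : Fin m ⊕ Fin m, Sum.elim ψ ψb s * Sum.elim ψ ψb s = 0)
    (B : A →ₗ[K] K)
include hanti hsq

theorem exists_perm_of_berezin_ne_zero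
    (hB0 : ∀ l : List (Fin m ⊕ Fin m), (∃ s, s ∉ l) → B (l.map (Sum.elim ψ ψb)).prod = 0)
    (S : Finset (Fin m)) {k : ℕ} (r : Fin k → Fin m × Fin m)
    (h : B (pairProd ψ ψb (S.orderEmbOfFin rfl) (S.orderEmbOfFin rfl) *
      pairProd ψ ψb (fun t => (r t).1) (fun t => (r t).2)) ≠ 0) :
    ∃ (τ : Fin k ≃ {x // x ∉ S}) (π : Equiv.Perm (Fin k)),
      r = fun t => ((τ t : Fin m), (τ (π t) : Fin m)) := by
  rw [← pairProd_append] at h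
  obtain ⟨ha, hj⟩ := bijective_of_berezin_pairProd_ne_zero hanti hsq B hB0 h
  have hS : ∀ x, x ∈ S ↔ x ∈ Set.range (S.orderEmbOfFin rfl) := fun _ => by simp
  obtain ⟨τ, hτ⟩ := Fin.exists_equiv_of_bijective_append ha hS
  obtain ⟨τ', hτ'⟩ := Fin.exists_equiv_of_bijective_append hj hS
  exact ⟨τ, τ'.trans τ.symm, funext fun t => Prod.ext (hτ t).symm (by simp [hτ'])⟩

theorem berezin_mul_pairProd_perm (hBtop : B (List.ofFn fun i : Fin m => ψb i * ψ i).prod = 1)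
    (S : Finset (Fin m)) {k : ℕ} (τ : Fin k ≃ {x // x ∉ S}) (π : Equiv.Perm (Fin k)) :
    B (pairProd ψ ψb (S.orderEmbOfFin rfl) (S.orderEmbOfFin rfl) *
      pairProd ψ ψb (fun t => (τ t : Fin m)) (fun t => τ (π t))) = Equiv.Perm.sign π := by
  have hS : ∀ x, x ∈ S ↔ x ∈ Set.range (S.orderEmbOfFin rfl) := fun _ => by simp
  have hτ := Fin.bijective_append_of_equiv (S.orderEmbOfFin rfl).injective hS τ
  rw [show (fun t => (τ (π t) : Fin m)) = (fun t => (τ t : Fin m)) ∘ π from rfl,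
    pairProd_comp_perm hanti hsq, mul_smul_comm, ← pairProd_append,
    pairProd_self_of_bijective hanti hτ, Units.smul_def, map_zsmul, hBtop, zsmul_one]

theorem berezin_prod_pairs_mul_pow
    (hB0 : ∀ l : List (Fin m ⊕ Fin m), (∃ s, s ∉ l) → B (l.map (Sum.elim ψ ψb)).prod = 0)
    (hBtop : B (List.ofFn fun i : Fin m => ψb i * ψ i).prod = 1)
    (C : Matrix (Fin m) (Fin m) K) (S : Finset (Fin m)) (k : ℕ) :
    B (((S.sort (· ≤ ·)).map fun i => ψb i * ψ i).prod * (∑ i, ∑ j, C i j • (ψb i * ψ j)) ^ k) =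
      Fintype.card (Fin k ≃ {x // x ∉ S}) *
        (C.submatrix (fun a : {x // x ∉ S} => (a : Fin m))
          (fun a : {x // x ∉ S} => (a : Fin m))).det := by
  set P := pairProd ψ ψb (S.orderEmbOfFin rfl) (S.orderEmbOfFin rfl)
  let encode (p : (Fin k ≃ {x // x ∉ S}) × Equiv.Perm (Fin k)) (t : Fin k) : Fin m × Fin m :=
    ((p.1 t : Fin m), (p.1 (p.2 t) : Fin m))
  have hencode : Function.Injective encode := by
    rintro ⟨τ, π⟩ ⟨τ', π'⟩ h
    obtain rfl : τ = τ' :=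
      Equiv.ext fun t => Subtype.ext (congrArg Prod.fst (congrFun h t))
    exact Prod.ext rfl (Equiv.ext fun t =>
      τ.injective (Subtype.ext (congrArg Prod.snd (congrFun h t))))
  calc _ = ∑ r : Fin k → Fin m × Fin m, (∏ t, C (r t).1 (r t).2) *
          B (P * pairProd ψ ψb (fun t => (r t).1) (fun t => (r t).2)) := by
        simp only [prod_sort_map_eq_pairProd, sum_sum_smul_mul_pow, Finset.mul_sum, mul_smul_comm,
          map_sum, map_smul, smul_eq_mul, P]
    _ = ∑ p, (∏ t, C (encode p t).1 (encode p t).2) * (Equiv.Perm.sign p.2 : K) := by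
        refine (Fintype.sum_of_injective encode hencode _ _ (fun r hr => ?_) fun p => ?_).symm
        · by_contra h
          obtain ⟨τ, π, rfl⟩ := exists_perm_of_berezin_ne_zero hanti hsq B hB0 S r
            (right_ne_zero_of_mul h)
          exact hr ⟨(τ, π), rfl⟩
        · rw [berezin_mul_pairProd_perm hanti hsq B hBtop]
    _ = ∑ τ : Fin k ≃ {x // x ∉ S}, (C.submatrix (fun a : {x // x ∉ S} => (a : Fin m))
          (fun a : {x // x ∉ S} => (a : Fin m))).det := by
        rw [Fintype.sum_prod_type]
        exact Finset.sum_congr rfl fun τ _ =>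
          Matrix.sum_perm_prod_mul_sign_eq_det_submatrix C (fun a : {x // x ∉ S} => (a : Fin m)) τ
    _ = _ := by simp

end Gaussian

end Grassmann

/-- **Fermionic Wick theorem for pairs**: with Grassmann generators
`ψ i, ψ̄ i` and the Berezin integral `B` (a linear functional vanishing on
monomials missing a generator, normalized on the top monomial), the fermionic
Gaussian state `⟨F⟩_C = det(C)⁻¹ B(F·exp(ψ̄ᵀCψ))` of `∏_{i∈A} ψ̄ i ψ i` equals
the principal minor `det((C⁻ᵀ)_{AA})` of the inverse-transpose of the
invertible matrix `C`. -/
theorem fermionic_wick_pairs {m : ℕ} {A : Type*} [Ring A] [Algebra ℝ A]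
    (ψ ψb : Fin m → A)
    (hanti : ∀ s t : Fin m ⊕ Fin m,
      Sum.elim ψ ψb s * Sum.elim ψ ψb t = -(Sum.elim ψ ψb t * Sum.elim ψ ψb s))
    (hsq : ∀ s : Fin m ⊕ Fin m, Sum.elim ψ ψb s * Sum.elim ψ ψb s = 0)
    (B : A →ₗ[ℝ] ℝ)
    (hB0 : ∀ l : List (Fin m ⊕ Fin m), (∃ s, s ∉ l) →
      B (l.map (Sum.elim ψ ψb)).prod = 0)
    (hBtop : B (List.ofFn fun i : Fin m => ψb i * ψ i).prod = 1)
    (C : Matrix (Fin m) (Fin m) ℝ) (hC : IsUnit C.det)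
    (S : Finset (Fin m)) :
    (C.det)⁻¹ *
        B ((((S.sort (· ≤ ·)).map fun i => ψb i * ψ i).prod) *
          ∑ k ∈ Finset.range (m + 1),
            (k.factorial : ℝ)⁻¹ • (∑ i, ∑ j, C i j • (ψb i * ψ j)) ^ k) =
      ((C⁻¹.transpose).submatrix (fun a : {x // x ∈ S} => (a : Fin m))
        (fun a : {x // x ∈ S} => (a : Fin m))).det := by
  have hcard : Fintype.card {x // x ∉ S} ≤ m :=
    (Fintype.card_subtype_le _).trans_eq (Fintype.card_fin m)
  rw [Finset.mul_sum, map_sum]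
  simp_rw [mul_smul_comm, map_smul, Grassmann.berezin_prod_pairs_mul_pow hanti hsq B hB0 hBtop,
    smul_eq_mul, ← mul_assoc]
  rw [← Finset.sum_mul, sum_range_inv_factorial_mul_card_equiv hcard, one_mul,
    ← Matrix.det_mul_det_inv_submatrix C hC S, ← mul_assoc, inv_mul_cancel₀ hC.ne_zero, one_mul,
    ← Matrix.transpose_submatrix, Matrix.det_transpose]
end
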